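/- arXiv:2401.16484 — 6 statements merged into one kernel-verified Lean document; each statement's English description precedes it below -/
import Mathlib

section
/- No cycles near an infinitely near point of the rotational axis (chart version of Proposition 5.1). Let U be an open neighborhood of 0 ∈ ℝ³ (coordinates (x,y,z)), let n ≥ 1 be an integer, let F : U → ℝ be continuous with F(0,0,0) ≠ 0, and let ξ : U → ℝ³ be a continuous vector field whose third component satisfies ξ₃(x,y,z) = zⁿ·F(x,y,z) on U. Then there exists an open neighborhood W ⊆ U of 0 such that no nonconstant periodic integral curve of ξ is contained in W \ {z = 0}. -/
/-- A continuous real function that never vanishes has constant sign. -/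
lemma sign_const_of_ne_zero {g : ℝ → ℝ} (hg : Continuous g) (h : ∀ t, g t ≠ 0) :
    (∀ t, 0 < g t) ∨ (∀ t, g t < 0) := by
  by_contra hcon
  push_neg at hcon
  obtain ⟨⟨a, ha⟩, ⟨b, hb⟩⟩ := hcon
  have ha' : g a < 0 := lt_of_le_of_ne ha (h a)
  have hb' : 0 < g b := lt_of_le_of_ne hb (Ne.symm (h b))
  obtain ⟨t, ht⟩ := intermediate_value_univ a b hg ⟨ha'.le, hb'.le⟩
  exact h t ht

/-- **No cycles near an infinitely near point of the rotational axis** (chart version of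
Proposition 5.1): if the third component of `ξ` is `zⁿ·F` with `F(0) ≠ 0`, then in a
small neighborhood of `0` there is no nonconstant periodic integral curve of `ξ`
contained in the complement of the plane `{z = 0}`. -/
theorem no_cycles_near_characteristic_singularity
    (U : Set (ℝ × ℝ × ℝ)) (hU : IsOpen U) (h0 : ((0, 0, 0) : ℝ × ℝ × ℝ) ∈ U)
    (n : ℕ) (hn : 1 ≤ n)
    (F : ℝ × ℝ × ℝ → ℝ) (hF : ContinuousOn F U) (hF0 : F (0, 0, 0) ≠ 0)
    (ξ : ℝ × ℝ × ℝ → ℝ × ℝ × ℝ) (hξ : ContinuousOn ξ U)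
    (hξ3 : ∀ p ∈ U, (ξ p).2.2 = p.2.2 ^ n * F p) :
    ∃ W : Set (ℝ × ℝ × ℝ), IsOpen W ∧ ((0, 0, 0) : ℝ × ℝ × ℝ) ∈ W ∧ W ⊆ U ∧
      ¬ ∃ (γ : ℝ → ℝ × ℝ × ℝ) (T : ℝ), 0 < T ∧
          (∀ t, HasDerivAt γ (ξ (γ t)) t) ∧ (∀ t, γ (t + T) = γ t) ∧
          (∃ t s, γ t ≠ γ s) ∧
          Set.range γ ⊆ W \ {p : ℝ × ℝ × ℝ | p.2.2 = 0} := by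
  refine ⟨U ∩ F ⁻¹' {0}ᶜ, hF.isOpen_inter_preimage hU isOpen_compl_singleton,
    ⟨h0, hF0⟩, Set.inter_subset_left, ?_⟩
  rintro ⟨γ, T, hT, hγ', hper, -, hrange⟩
  have hmem : ∀ t, γ t ∈ U ∧ F (γ t) ≠ 0 ∧ (γ t).2.2 ≠ 0 := by
    intro t
    have h1 := hrange (Set.mem_range_self t)
    exact ⟨h1.1.1, h1.1.2, h1.2⟩
  -- the third coordinate and its derivative
  have hzd : ∀ t, HasDerivAt (fun t => (γ t).2.2) ((ξ (γ t)).2.2) t := by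
    intro t
    have h1 : HasDerivAt (fun t => (γ t).2) ((ξ (γ t)).2) t :=
      (ContinuousLinearMap.snd ℝ ℝ (ℝ × ℝ)).hasFDerivAt.comp_hasDerivAt t (hγ' t)
    exact (ContinuousLinearMap.snd ℝ ℝ ℝ).hasFDerivAt.comp_hasDerivAt t h1
  have hγc : Continuous γ := continuous_iff_continuousAt.2 fun t => (hγ' t).continuousAt
  -- the derivative is continuous and never zero
  have hgc : Continuous (fun t => (ξ (γ t)).2.2) := by
    have : Continuous (fun t => ξ (γ t)) := by
      rw [continuous_iff_continuousAt]
      intro t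
      exact (hξ.continuousAt (hU.mem_nhds (hmem t).1)).comp hγc.continuousAt
    exact (continuous_snd.comp continuous_snd).comp this
  have hgne : ∀ t, (ξ (γ t)).2.2 ≠ 0 := by
    intro t
    rw [hξ3 _ (hmem t).1]
    exact mul_ne_zero (pow_ne_zero n (hmem t).2.2) (hmem t).2.1
  -- hence the third coordinate is strictly monotone or strictly antitone
  have hz0 : (γ (0 + T)).2.2 = (γ 0).2.2 := by rw [hper 0]
  rcases sign_const_of_ne_zero hgc hgne with hpos | hneg
  · have : StrictMono (fun t => (γ t).2.2) :=
      strictMono_of_deriv_pos (fun t => by rw [(hzd t).deriv]; exact hpos t)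
    exact absurd hz0 (ne_of_gt (this (by linarith : (0:ℝ) < 0 + T)))
  · have : StrictAnti (fun t => (γ t).2.2) :=
      strictAnti_of_deriv_neg (fun t => by rw [(hzd t).deriv]; exact hneg t)
    exact absurd hz0 (ne_of_lt (this (by linarith : (0:ℝ) < 0 + T)))
end

section
/- No cycles near a corner characteristic cycle (chart version of Proposition 5.2). Let ξ : ℝ³ → ℝ³ be a continuous vector field in coordinates (θ, z, ρ), 2π-periodic in θ (ξ(θ + 2π, z, ρ) = ξ(θ, z, ρ)). Suppose there are integers a, b ≥ 0 and a continuous function g : ℝ³ → ℝ, 2π-periodic in θ, with g(θ, 0, 0) ≠ 0 for all θ, such that the ρ-component of ξ satisfies ξ_ρ(θ, z, ρ) = ρᵃ·z^b·g(θ, z, ρ). Then there exists ε > 0 such that no nonconstant periodic integral curve of ξ is contained in the region {(θ, z, ρ) : 0 < z < ε, 0 < ρ < ε}. -/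
open Real

/-- **No cycles near a corner characteristic cycle** (chart version of Proposition 5.2):
in coordinates `(θ, z, ρ)`, if the `ρ`-component of `ξ` is `ρᵃ·z^b·g` with `g`
nonvanishing on the corner circle `{z = ρ = 0}`, then no nonconstant periodic integral
curve of `ξ` is contained in `{0 < z < ε, 0 < ρ < ε}` for `ε` small. -/
theorem no_cycles_near_corner_characteristic_cycle
    (ξ : ℝ × ℝ × ℝ → ℝ × ℝ × ℝ) (hξ : Continuous ξ)
    (hper : ∀ θ z ρ : ℝ, ξ (θ + 2 * π, z, ρ) = ξ (θ, z, ρ))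
    (a b : ℕ) (g : ℝ × ℝ × ℝ → ℝ) (hg : Continuous g)
    (hgper : ∀ θ z ρ : ℝ, g (θ + 2 * π, z, ρ) = g (θ, z, ρ))
    (hg0 : ∀ θ : ℝ, g (θ, 0, 0) ≠ 0)
    (hξρ : ∀ θ z ρ : ℝ, (ξ (θ, z, ρ)).2.2 = ρ ^ a * z ^ b * g (θ, z, ρ)) :
    ∃ ε > 0,
      ¬ ∃ (γ : ℝ → ℝ × ℝ × ℝ) (T : ℝ), 0 < T ∧
          (∀ t, HasDerivAt γ (ξ (γ t)) t) ∧ (∀ t, γ (t + T) = γ t) ∧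
          (∃ t s, γ t ≠ γ s) ∧
          (∀ t, 0 < (γ t).2.1 ∧ (γ t).2.1 < ε ∧ 0 < (γ t).2.2 ∧ (γ t).2.2 < ε) := by
  -- the sign of `g` on the corner circle is constant
  have hconth : Continuous (fun θ : ℝ => g (θ, 0, 0)) := by
    apply hg.comp; continuity
  have hsign : ∃ s : ℝ, (s = 1 ∨ s = -1) ∧ ∀ θ : ℝ, 0 < s * g (θ, 0, 0) := by
    rcases lt_or_gt_of_ne (hg0 0) with h0 | h0
    · refine ⟨-1, Or.inr rfl, fun θ => ?_⟩
      have : g (θ, 0, 0) < 0 := by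
        by_contra hcon
        push_neg at hcon
        have h2 : 0 < g (θ, 0, 0) := lt_of_le_of_ne hcon (Ne.symm (hg0 θ))
        have hmem : (0 : ℝ) ∈ Set.uIcc (g (0, 0, 0)) (g (θ, 0, 0)) :=
          Set.mem_uIcc.mpr (Or.inl ⟨h0.le, h2.le⟩)
        obtain ⟨θ', _, hθ'⟩ := intermediate_value_uIcc (a := (0:ℝ)) (b := θ)
          hconth.continuousOn hmem
        exact hg0 θ' hθ'
      nlinarith
    · refine ⟨1, Or.inl rfl, fun θ => ?_⟩
      have : 0 < g (θ, 0, 0) := by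
        by_contra hcon
        push_neg at hcon
        have h2 : g (θ, 0, 0) < 0 := lt_of_le_of_ne hcon (hg0 θ)
        have hmem : (0 : ℝ) ∈ Set.uIcc (g (0, 0, 0)) (g (θ, 0, 0)) :=
          Set.mem_uIcc.mpr (Or.inr ⟨h2.le, h0.le⟩)
        obtain ⟨θ', _, hθ'⟩ := intermediate_value_uIcc (a := (0:ℝ)) (b := θ)
          hconth.continuousOn hmem
        exact hg0 θ' hθ'
      nlinarith
  obtain ⟨s, hs1, hsg⟩ := hsign
  -- get a uniform neighborhood where `s * g > 0`
  have hU : IsOpen {p : ℝ × ℝ × ℝ | 0 < s * g p} :=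
    isOpen_lt continuous_const (continuous_const.mul hg)
  have hK : IsCompact ((Set.Icc (0:ℝ) (2*π)) ×ˢ (({0} : Set ℝ) ×ˢ ({0} : Set ℝ))) :=
    isCompact_Icc.prod (isCompact_singleton.prod isCompact_singleton)
  have hKU : ((Set.Icc (0:ℝ) (2*π)) ×ˢ (({0} : Set ℝ) ×ˢ ({0} : Set ℝ))) ⊆
      {p : ℝ × ℝ × ℝ | 0 < s * g p} := by
    rintro ⟨θ, z, ρ⟩ ⟨_, hz, hρ⟩
    simp only [Set.mem_singleton_iff] at hz hρ
    rcases hz with rfl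
    rcases hρ with rfl
    exact hsg θ
  obtain ⟨δ, hδ, hsub⟩ := hK.exists_thickening_subset_open hU hKU
  have key : ∀ θ z ρ : ℝ, |z| < δ → |ρ| < δ → 0 < s * g (θ, z, ρ) := by
    intro θ z ρ hz hρ
    have hp : Function.Periodic (fun θ => g (θ, z, ρ)) (2 * π) := fun x => hgper x z ρ
    obtain ⟨θ', hθ'mem, hθ'eq⟩ := hp.exists_mem_Ico₀ two_pi_pos θ
    have hmem : (θ', z, ρ) ∈ Metric.thickening δ
        ((Set.Icc (0:ℝ) (2*π)) ×ˢ (({0} : Set ℝ) ×ˢ ({0} : Set ℝ))) := by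
      rw [Metric.mem_thickening_iff]
      refine ⟨(θ', 0, 0), ⟨⟨hθ'mem.1, hθ'mem.2.le⟩, rfl, rfl⟩, ?_⟩
      simp only [Prod.dist_eq, Real.dist_eq, sub_self, sub_zero, abs_zero]
      rw [max_lt_iff, max_lt_iff]
      exact ⟨hδ, hz, hρ⟩
    have := hsub hmem
    simp only [Set.mem_setOf_eq] at this
    calc (0:ℝ) < s * g (θ', z, ρ) := this
    _ = s * g (θ, z, ρ) := by rw [← hθ'eq]
  refine ⟨δ, hδ, ?_⟩
  rintro ⟨γ, T, hT, hγ, hperT, -, hreg⟩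
  -- the function `t ↦ s * ρ(γ t)` is strictly monotone
  set f : ℝ → ℝ := fun t => s * (γ t).2.2 with hf
  have hdd : ∀ t, HasDerivAt (fun t => (γ t).2.2) ((ξ (γ t)).2.2) t := by
    intro t
    have := ((hγ t).hasFDerivAt.snd.snd).hasDerivAt
    simpa using this
  have hfd : ∀ t, HasDerivAt f (s * (ξ (γ t)).2.2) t := fun t => (hdd t).const_mul s
  have hfpos : ∀ t, 0 < s * (ξ (γ t)).2.2 := by
    intro t
    obtain ⟨hz0, hzδ, hρ0, hρδ⟩ := hreg t
    have hval : (ξ (γ t)).2.2 = (γ t).2.2 ^ a * (γ t).2.1 ^ b * g (γ t) := by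
      have := hξρ (γ t).1 (γ t).2.1 (γ t).2.2
      simpa using this
    have hgpos : 0 < s * g ((γ t).1, (γ t).2.1, (γ t).2.2) :=
      key _ _ _ (by rw [abs_of_pos hz0]; exact hzδ) (by rw [abs_of_pos hρ0]; exact hρδ)
    rw [hval]
    have : g (γ t) = g ((γ t).1, (γ t).2.1, (γ t).2.2) := by simp
    rw [this]
    have h1 : 0 < (γ t).2.2 ^ a := pow_pos hρ0 a
    have h2 : 0 < (γ t).2.1 ^ b := pow_pos hz0 b
    nlinarith [mul_pos (mul_pos h1 h2) hgpos]
  have hmono : StrictMono f := by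
    apply strictMono_of_deriv_pos
    intro t
    rw [(hfd t).deriv]
    exact hfpos t
  have h1 : f 0 < f (0 + T) := hmono (by linarith)
  have h2 : f (0 + T) = f 0 := by simp only [hf]; rw [hperT 0]
  linarith
end

section
/- Monotonicity boxes away from characteristic cycles, non-dicritical case (Lemma 4.2(1)). Let n ∈ ℕ and let ξ : ℝ³ → ℝ³ be a continuous vector field in coordinates (θ, z, ρ), 2π-periodic in θ, whose z-component has the form ξ_z(θ, z, ρ) = ρⁿ·A(θ, z, ρ) with A continuous and 2π-periodic in θ, and such that A(θ, z, 0) = a(z) depends only on z. Let α < β be reals with a(z) ≠ 0 for all z ∈ [α, β]. Then there exists δ > 0 such that for every integral curve γ of ξ whose image is contained in ℝ × [α, β] × (0, δ], the function t ↦ z(γ(t)) is strictly monotone; in particular no nonconstant periodic integral curve of ξ is contained in ℝ × [α, β] × (0, δ]. -/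
/-!
On the compact set `[0, 2π] × [α, β] × {0}` the function `A` equals `a(z) ≠ 0`, so by
continuity and compactness `A` stays nonzero on a uniform neighbourhood of it, and by
periodicity in `θ` on all of `ℝ × [α, β] × [-δ, δ]`. For `ρ > 0` the derivative
`ρⁿ·A` of `z` along an integral curve in the box is therefore never zero, hence of constant
sign by Darboux's theorem, and `z` is strictly monotone; a periodic curve cannot have that.
-/

open Real Set Metric

theorem exists_pos_forall_mem_of_periodic_of_zero_section
    {E Y : Type*} [PseudoMetricSpace E] [TopologicalSpace Y]
    {f : ℝ × E × ℝ → Y} (hf : Continuous f) {c : ℝ} (hc : 0 < c)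
    (hper : ∀ θ z ρ, f (θ + c, z, ρ) = f (θ, z, ρ)) {s : Set E} (hs : IsCompact s)
    {U : Set Y} (hU : IsOpen U) (h0 : ∀ θ, ∀ z ∈ s, f (θ, z, 0) ∈ U) :
    ∃ δ > 0, ∀ θ, ∀ z ∈ s, ∀ ρ, |ρ| ≤ δ → f (θ, z, ρ) ∈ U := by
  have hK : IsCompact (Icc 0 c ×ˢ s ×ˢ {(0 : ℝ)}) :=
    isCompact_Icc.prod (hs.prod isCompact_singleton)
  have hKU : Icc 0 c ×ˢ s ×ˢ {(0 : ℝ)} ⊆ f ⁻¹' U := by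
    rintro ⟨θ, z, ρ⟩ ⟨-, hz, rfl⟩
    exact h0 θ z hz
  obtain ⟨δ, hδ, hδU⟩ := hK.exists_cthickening_subset_open (hU.preimage hf) hKU
  refine ⟨δ, hδ, fun θ z hz ρ hρ => ?_⟩
  obtain ⟨θ', hθ', hθθ'⟩ :=
    Function.Periodic.exists_mem_Ico₀ (f := fun θ => f (θ, z, ρ)) (fun θ => hper θ z ρ) hc θ
  rw [show f (θ, z, ρ) = f (θ', z, ρ) from hθθ']
  refine hδU (mem_cthickening_of_dist_le _ (θ', z, 0) δ _ ⟨Ico_subset_Icc_self hθ', hz, rfl⟩ ?_)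
  simpa [Prod.dist_eq, Real.dist_eq] using hρ

theorem HasDerivAt.snd_fst {X Y Z : Type*} [NormedAddCommGroup X] [NormedSpace ℝ X]
    [NormedAddCommGroup Y] [NormedSpace ℝ Y] [NormedAddCommGroup Z] [NormedSpace ℝ Z]
    {γ : ℝ → X × Y × Z} {v : X × Y × Z} {t : ℝ} (h : HasDerivAt γ v t) :
    HasDerivAt (fun t => (γ t).2.1) v.2.1 t := by
  simpa using h.hasFDerivAt.snd.fst.hasDerivAt

theorem strictMono_or_strictAnti_of_hasDerivAt_ne_zero {f f' : ℝ → ℝ}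
    (hf : ∀ t, HasDerivAt f (f' t) t) (hf' : ∀ t, f' t ≠ 0) :
    StrictMono f ∨ StrictAnti f := by
  rcases hasDerivWithinAt_forall_lt_or_forall_gt_of_forall_ne convex_univ
    (fun t _ => (hf t).hasDerivWithinAt) (fun t _ => hf' t) with hneg | hpos
  · exact Or.inr (strictAnti_of_hasDerivAt_neg hf fun t => hneg t (mem_univ t))
  · exact Or.inl (strictMono_of_hasDerivAt_pos hf fun t => hpos t (mem_univ t))

theorem monotonicity_boxes_nondicritical_general
    (n : ℕ)
    (ξ : ℝ × ℝ × ℝ → ℝ × ℝ × ℝ)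
    (A : ℝ × ℝ × ℝ → ℝ) (hA : Continuous A)
    (hAper : ∀ θ z ρ : ℝ, A (θ + 2 * π, z, ρ) = A (θ, z, ρ))
    (a : ℝ → ℝ) (hA0 : ∀ θ z : ℝ, A (θ, z, 0) = a z)
    (hξz : ∀ θ z ρ : ℝ, (ξ (θ, z, ρ)).2.1 = ρ ^ n * A (θ, z, ρ))
    (α β : ℝ) (ha : ∀ z ∈ Set.Icc α β, a z ≠ 0) :
    ∃ δ > 0,
      (∀ γ : ℝ → ℝ × ℝ × ℝ, (∀ t, HasDerivAt γ (ξ (γ t)) t) →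
        (∀ t, (γ t).2.1 ∈ Set.Icc α β ∧ (γ t).2.2 ∈ Set.Ioc 0 δ) →
        StrictMono (fun t => (γ t).2.1) ∨ StrictAnti (fun t => (γ t).2.1)) ∧
      ¬ ∃ (γ : ℝ → ℝ × ℝ × ℝ) (T : ℝ), 0 < T ∧
          (∀ t, HasDerivAt γ (ξ (γ t)) t) ∧ (∀ t, γ (t + T) = γ t) ∧
          (∃ t s, γ t ≠ γ s) ∧
          (∀ t, (γ t).2.1 ∈ Set.Icc α β ∧ (γ t).2.2 ∈ Set.Ioc 0 δ) := by
  obtain ⟨δ, hδ, hA_ne⟩ := exists_pos_forall_mem_of_periodic_of_zero_section hA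
    two_pi_pos hAper isCompact_Icc isOpen_compl_singleton
    fun θ z hz => by simpa [hA0] using ha z hz
  have hmono : ∀ γ : ℝ → ℝ × ℝ × ℝ, (∀ t, HasDerivAt γ (ξ (γ t)) t) →
      (∀ t, (γ t).2.1 ∈ Icc α β ∧ (γ t).2.2 ∈ Ioc 0 δ) →
      StrictMono (fun t => (γ t).2.1) ∨ StrictAnti (fun t => (γ t).2.1) := by
    intro γ hγ hbox
    refine strictMono_or_strictAnti_of_hasDerivAt_ne_zero
      (f' := fun t => (γ t).2.2 ^ n * A (γ t)) (fun t => ?_) fun t => ?_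
    · simpa only [hξz] using (hγ t).snd_fst
    · obtain ⟨hz, hρ0, hρδ⟩ := hbox t
      exact mul_ne_zero (pow_pos hρ0 n).ne'
        (hA_ne _ _ hz _ (by rwa [abs_of_pos hρ0]))
  refine ⟨δ, hδ, hmono, ?_⟩
  rintro ⟨γ, T, hT, hγ, hperiod, -, hbox⟩
  have hret : (γ (0 + T)).2.1 = (γ 0).2.1 := by rw [hperiod]
  rcases hmono γ hγ hbox with h | h
  · exact (h (by linarith : (0 : ℝ) < 0 + T)).ne' hret
  · exact (h (by linarith : (0 : ℝ) < 0 + T)).ne hret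

/-- **Monotonicity boxes away from characteristic cycles, non-dicritical case**
(Lemma 4.2(1)): if `ξ_z = ρⁿ·A` with `A(θ,z,0) = a(z)` nonvanishing on `[α,β]`, then
for `δ` small the `z`-coordinate is strictly monotone along every integral curve of `ξ`
contained in `ℝ × [α,β] × (0,δ]`; in particular no nonconstant periodic integral curve
of `ξ` is contained there. -/
theorem monotonicity_boxes_nondicritical
    (n : ℕ)
    (ξ : ℝ × ℝ × ℝ → ℝ × ℝ × ℝ) (hξ : Continuous ξ)
    (hper : ∀ θ z ρ : ℝ, ξ (θ + 2 * π, z, ρ) = ξ (θ, z, ρ))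
    (A : ℝ × ℝ × ℝ → ℝ) (hA : Continuous A)
    (hAper : ∀ θ z ρ : ℝ, A (θ + 2 * π, z, ρ) = A (θ, z, ρ))
    (a : ℝ → ℝ) (hA0 : ∀ θ z : ℝ, A (θ, z, 0) = a z)
    (hξz : ∀ θ z ρ : ℝ, (ξ (θ, z, ρ)).2.1 = ρ ^ n * A (θ, z, ρ))
    (α β : ℝ) (hαβ : α < β) (ha : ∀ z ∈ Set.Icc α β, a z ≠ 0) :
    ∃ δ > 0,
      (∀ γ : ℝ → ℝ × ℝ × ℝ, (∀ t, HasDerivAt γ (ξ (γ t)) t) →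
        (∀ t, (γ t).2.1 ∈ Set.Icc α β ∧ (γ t).2.2 ∈ Set.Ioc 0 δ) →
        StrictMono (fun t => (γ t).2.1) ∨ StrictAnti (fun t => (γ t).2.1)) ∧
      ¬ ∃ (γ : ℝ → ℝ × ℝ × ℝ) (T : ℝ), 0 < T ∧
          (∀ t, HasDerivAt γ (ξ (γ t)) t) ∧ (∀ t, γ (t + T) = γ t) ∧
          (∃ t s, γ t ≠ γ s) ∧
          (∀ t, (γ t).2.1 ∈ Set.Icc α β ∧ (γ t).2.2 ∈ Set.Ioc 0 δ) :=
  monotonicity_boxes_nondicritical_general n ξ A hA hAper a hA0 hξz α β ha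
end

section
/- Quadratic drift estimate along trajectories (the key estimate in the proof of Lemma 4.2(3)). Let n ∈ ℕ and a, K > 0. Let z, ρ : [t₀, t₁] → ℝ be differentiable functions with ρ(t) > 0, ρ'(t) ≤ −a·ρ(t)ⁿ and |z'(t)| ≤ K·ρ(t)^{n+1} for all t ∈ [t₀, t₁]. Then |z(t₁) − z(t₀)| ≤ (K/(2a))·(ρ(t₀)² − ρ(t₁)²) ≤ (K/(2a))·ρ(t₀)². -/
/-!
Since `ρ' ≤ -a ρⁿ` and `ρ ≥ 0`, the bound `|z'| ≤ K ρⁿ⁺¹` gives `|z'| ≤ -(K/(2a) · ρ²)'`, so the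
total variation of `z` is bounded by the decrease of `K/(2a) · ρ²`.
-/

open Set

theorem norm_sub_le_sub_of_norm_deriv_le_neg_deriv {E : Type*} [NormedAddCommGroup E]
    [NormedSpace ℝ E] {f f' : ℝ → E} {V V' : ℝ → ℝ} {a b : ℝ} (hab : a ≤ b)
    (hf : ∀ t ∈ Icc a b, HasDerivAt f (f' t) t) (hV : ∀ t ∈ Icc a b, HasDerivAt V (V' t) t)
    (bound : ∀ t ∈ Ico a b, ‖f' t‖ ≤ -V' t) :
    ‖f b - f a‖ ≤ V a - V b := by
  have hfa (t) (ht : t ∈ Icc a b) : HasDerivAt (fun s => f s - f a) (f' t) t :=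
    (hf t ht).sub_const (f a)
  have hVa (t) (ht : t ∈ Icc a b) : HasDerivAt (fun s => V a - V s) (-V' t) t :=
    (hV t ht).const_sub (V a)
  exact image_norm_le_of_norm_deriv_right_le_deriv_boundary'
    (fun t ht => (hfa t ht).continuousAt.continuousWithinAt)
    (fun t ht => (hfa t (Ico_subset_Icc_self ht)).hasDerivWithinAt) (by simp)
    (fun t ht => (hVa t ht).continuousAt.continuousWithinAt)
    (fun t ht => (hVa t (Ico_subset_Icc_self ht)).hasDerivWithinAt) bound (right_mem_Icc.2 hab)

theorem mul_pow_succ_le_neg_mul_deriv_sq {n : ℕ} {a K r r' : ℝ} (ha : 0 < a) (hK : 0 ≤ K)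
    (hr : 0 ≤ r) (hr' : r' ≤ -a * r ^ n) :
    K * r ^ (n + 1) ≤ -(K / (2 * a) * (2 * r * r')) := by
  have hdecay : a * r ^ (n + 1) ≤ -(r * r') := by
    rw [pow_succ]; nlinarith [mul_le_mul_of_nonneg_left hr' hr]
  calc K * r ^ (n + 1) = K / a * (a * r ^ (n + 1)) := by field_simp
    _ ≤ K / a * -(r * r') := by gcongr
    _ = -(K / (2 * a) * (2 * r * r')) := by field_simp

/-- **Quadratic drift estimate along trajectories** (key estimate in the proof of
Lemma 4.2(3)): if `ρ > 0`, `ρ' ≤ −a·ρⁿ` and `|z'| ≤ K·ρ^{n+1}` on `[t₀,t₁]`, then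
`|z(t₁) − z(t₀)| ≤ (K/(2a))·(ρ(t₀)² − ρ(t₁)²) ≤ (K/(2a))·ρ(t₀)²`. -/
theorem quadratic_drift_estimate
    (n : ℕ) (a K : ℝ) (ha : 0 < a) (hK : 0 < K)
    (t₀ t₁ : ℝ) (ht : t₀ ≤ t₁)
    (z ρ z' ρ' : ℝ → ℝ)
    (hz : ∀ t ∈ Set.Icc t₀ t₁, HasDerivAt z (z' t) t)
    (hρ : ∀ t ∈ Set.Icc t₀ t₁, HasDerivAt ρ (ρ' t) t)
    (hρpos : ∀ t ∈ Set.Icc t₀ t₁, 0 < ρ t)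
    (hρ' : ∀ t ∈ Set.Icc t₀ t₁, ρ' t ≤ -a * ρ t ^ n)
    (hz' : ∀ t ∈ Set.Icc t₀ t₁, |z' t| ≤ K * ρ t ^ (n + 1)) :
    |z t₁ - z t₀| ≤ K / (2 * a) * (ρ t₀ ^ 2 - ρ t₁ ^ 2) ∧
      K / (2 * a) * (ρ t₀ ^ 2 - ρ t₁ ^ 2) ≤ K / (2 * a) * ρ t₀ ^ 2 := by
  have hc : 0 ≤ K / (2 * a) := by positivity
  have hV (t) (ht : t ∈ Icc t₀ t₁) :
      HasDerivAt (fun s => K / (2 * a) * ρ s ^ 2) (K / (2 * a) * (2 * ρ t * ρ' t)) t := by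
    simpa using ((hρ t ht).pow 2).const_mul (K / (2 * a))
  refine ⟨?_, mul_le_mul_of_nonneg_left (sub_le_self _ (sq_nonneg _)) hc⟩
  rw [mul_sub, ← Real.norm_eq_abs]
  refine norm_sub_le_sub_of_norm_deriv_le_neg_deriv ht hz hV fun t hts => ?_
  have hts := Ico_subset_Icc_self hts
  exact (hz' t hts).trans
    (mul_pow_succ_le_neg_mul_deriv_sq ha hK.le (hρpos t hts).le (hρ' t hts))
end

section
/- No periodic orbits in a cone around a non-fixed invariant curve (Lemma 5.7, in coordinates where the invariant curve has been flattened to order N). Let U be a neighborhood of 0 ∈ ℝ² with coordinates (z, ρ), and let P : U → ℝ² be a map whose second component satisfies, on U, ρ∘P(z, ρ) = ρ + ρᵏ·(ρˢ·Ã(ρ) + z·B(z, ρ)), where k ≥ 1 and s ≥ 0 are integers, Ã is a continuous real function with Ã(0) = α ≠ 0, and B is a continuous real function on U. Then for every integer N > s there exists δ > 0 such that P has no periodic orbit contained in the cone Σ_{N,δ} = {(z, ρ) : |z| < ρᴺ, 0 < ρ < δ}: there exist no m ≥ 1 and points p₀, …, p_{m−1} ∈ Σ_{N,δ} with P(p_i)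 = p_{i+1 mod m} for all i. -/
/-!
Up to the sign of `α`, the coordinate `ρ` is a strict Lyapunov function on a thin cone: there
`|z·B| ≤ ρᴺ·|B| = ρˢ·(ρᴺ⁻ˢ|B|)` is negligible against `ρˢ·Ã(ρ) ≈ ρˢ·α`, so `α·(ρ∘P − ρ) > 0`,
and a quantity that strictly increases along an orbit cannot return to its initial value.
-/

open Filter Topology

/-- The conic neighborhood `Σ_{N,δ} = {(z,ρ) : |z| < ρᴺ, 0 < ρ < δ}` in coordinates
`(z, ρ)`. -/
def cone (N : ℕ) (δ : ℝ) : Set (ℝ × ℝ) :=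
  {q : ℝ × ℝ | |q.1| < q.2 ^ N ∧ 0 < q.2 ∧ q.2 < δ}

theorem not_exists_cycle_of_lt_map {X β : Type*} [Preorder β] {P : X → X} {S : Set X}
    {f : X → β} (hf : ∀ q ∈ S, f q < f (P q)) :
    ¬ ∃ (m : ℕ) (p : ℕ → X), 0 < m ∧
      (∀ i < m, p i ∈ S) ∧ (∀ i < m, P (p i) = p (i + 1)) ∧ p m = p 0 := by
  rintro ⟨m, p, hm, hS, hP, hper⟩
  have hmono : StrictMonoOn (f ∘ p) (Set.Iic m) :=
    strictMonoOn_Iic_of_lt_succ fun i hi => by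
      simpa only [Function.comp_apply, Order.succ_eq_add_one, hP i hi] using hf _ (hS i hi)
  have := hmono (Set.mem_Iic.2 (Nat.zero_le m)) (Set.mem_Iic.2 le_rfl) hm
  simp only [Function.comp_apply, hper] at this
  exact lt_irrefl _ this

theorem cone_subset_ball {N : ℕ} {δ : ℝ} (hN : N ≠ 0) (hδ : δ ≤ 1) :
    cone N δ ⊆ Metric.ball 0 δ := by
  rintro ⟨z, ρ⟩ ⟨hz, hρ, hρδ⟩
  have hzρ : |z| < ρ := hz.trans_le (pow_le_of_le_one hρ.le (by linarith) hN)
  rw [Metric.mem_ball, Prod.dist_eq]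
  simp only [Prod.fst_zero, Prod.snd_zero, Real.dist_eq, sub_zero, abs_of_pos hρ]
  exact max_lt (hzρ.trans hρδ) hρδ

theorem exists_cone_subset_of_mem_nhds {N : ℕ} {S : Set (ℝ × ℝ)} (hN : N ≠ 0)
    (hS : S ∈ 𝓝 0) : ∃ δ > 0, cone N δ ⊆ S := by
  obtain ⟨ε, hε, hball⟩ := Metric.mem_nhds_iff.mp hS
  refine ⟨min ε 1, lt_min hε one_pos, ?_⟩
  exact (cone_subset_ball hN (min_le_right _ _)).trans
    ((Metric.ball_subset_ball (min_le_left _ _)).trans hball)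

theorem pos_mul_mul_add_of_abs_sub_lt_half {α a x y : ℝ} (hx : 0 < x)
    (ha : |a - α| < |α| / 2) (hy : |y| ≤ x * (|α| / 2)) : 0 < α * (x * a + y) := by
  have hαa : α ^ 2 / 2 < α * a := by
    have h : |α * (a - α)| < α ^ 2 / 2 := by
      rw [abs_mul]
      have hα : 0 < |α| := by linarith [abs_nonneg (a - α)]
      nlinarith [sq_abs α]
    linarith [neg_abs_le (α * (a - α))]
  have hαy : |α * y| ≤ x * (α ^ 2 / 2) := by
    rw [abs_mul]
    nlinarith [sq_abs α, abs_nonneg α]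
  nlinarith [neg_abs_le (α * y)]

theorem pos_mul_pow_mul_add_of_abs_lt_pow {α a b z ρ : ℝ} {s N : ℕ} (hsN : s ≤ N)
    (hρ : 0 < ρ) (hz : |z| < ρ ^ N) (ha : |a - α| < |α| / 2)
    (hb : |b| * ρ ^ (N - s) < |α| / 2) : 0 < α * (ρ ^ s * a + z * b) := by
  refine pos_mul_mul_add_of_abs_sub_lt_half (pow_pos hρ s) ha ?_
  calc |z * b| = |z| * |b| := abs_mul z b
    _ ≤ ρ ^ N * |b| := mul_le_mul_of_nonneg_right hz.le (abs_nonneg b)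
    _ = ρ ^ s * (|b| * ρ ^ (N - s)) := by rw [← pow_mul_pow_sub ρ hsN]; ring
    _ ≤ ρ ^ s * (|α| / 2) := by gcongr

theorem no_periodic_orbit_in_cone_nonfixed_general
    (U : Set (ℝ × ℝ)) (hU : U ∈ nhds ((0, 0) : ℝ × ℝ))
    (P : ℝ × ℝ → ℝ × ℝ)
    (k s : ℕ)
    (Atil : ℝ → ℝ) (hAtil : Continuous Atil) (α : ℝ) (hα : Atil 0 = α) (hα0 : α ≠ 0)
    (B : ℝ × ℝ → ℝ) (hB : ContinuousOn B U)
    (hP : ∀ p ∈ U, (P p).2 = p.2 + p.2 ^ k * (p.2 ^ s * Atil p.2 + p.1 * B p)) :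
    ∀ N : ℕ, s < N →
      ∃ δ > 0,
        ¬ ∃ (m : ℕ) (p : ℕ → ℝ × ℝ), 0 < m ∧
            (∀ i < m, p i ∈ cone N δ) ∧ (∀ i < m, P (p i) = p (i + 1)) ∧ p m = p 0 := by
  intro N hN
  have hα2 : 0 < |α| / 2 := by positivity
  have hA : ∀ᶠ q in 𝓝 ((0, 0) : ℝ × ℝ), |Atil q.2 - α| < |α| / 2 :=
    ContinuousAt.eventually_lt (by fun_prop) continuousAt_const (by simpa [hα] using hα2)
  have hBc : ContinuousAt B (0, 0) := hB.continuousAt hU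
  have hBsmall : ∀ᶠ q in 𝓝 ((0, 0) : ℝ × ℝ), |B q| * q.2 ^ (N - s) < |α| / 2 :=
    ContinuousAt.eventually_lt (by fun_prop) continuousAt_const
      (by simpa [Nat.sub_ne_zero_of_lt hN] using hα2)
  obtain ⟨δ, hδ, hcone⟩ := exists_cone_subset_of_mem_nhds (N := N) (by omega)
    (inter_mem hU (inter_mem hA hBsmall))
  refine ⟨δ, hδ, not_exists_cycle_of_lt_map (f := fun q => α * q.2) fun q hq => ?_⟩
  obtain ⟨hqU, hqA, hqB⟩ := hcone hq
  obtain ⟨hz, hρ, -⟩ := hq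
  have hE := pos_mul_pow_mul_add_of_abs_lt_pow hN.le hρ hz hqA hqB
  rw [hP q hqU]
  nlinarith [mul_pos (pow_pos hρ k) hE]

/-- **No periodic orbits in a cone around a non-fixed invariant curve** (Lemma 5.7, in
coordinates where the invariant curve has been flattened to order `N`): if
`ρ∘P = ρ + ρᵏ·(ρˢ·Ã(ρ) + z·B(z,ρ))` with `Ã(0) = α ≠ 0`, then for every `N > s` there is
`δ > 0` such that `P` has no periodic orbit contained in `Σ_{N,δ}`. -/
theorem no_periodic_orbit_in_cone_nonfixed
    (U : Set (ℝ × ℝ)) (hU : U ∈ nhds ((0, 0) : ℝ × ℝ))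
    (P : ℝ × ℝ → ℝ × ℝ)
    (k s : ℕ) (hk : 1 ≤ k)
    (Atil : ℝ → ℝ) (hAtil : Continuous Atil) (α : ℝ) (hα : Atil 0 = α) (hα0 : α ≠ 0)
    (B : ℝ × ℝ → ℝ) (hB : ContinuousOn B U)
    (hP : ∀ p ∈ U, (P p).2 = p.2 + p.2 ^ k * (p.2 ^ s * Atil p.2 + p.1 * B p)) :
    ∀ N : ℕ, s < N →
      ∃ δ > 0,
        ¬ ∃ (m : ℕ) (p : ℕ → ℝ × ℝ), 0 < m ∧
            (∀ i < m, p i ∈ cone N δ) ∧ (∀ i < m, P (p i) = p (i + 1)) ∧ p m = p 0 :=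
  no_periodic_orbit_in_cone_nonfixed_general U hU P k s Atil hAtil α hα hα0 B hB hP
end

section
/- Periodic orbits in a cone around a curve of fixed points are fixed points on the curve (Lemma 5.8). Let U be an open connected neighborhood of 0 ∈ ℝ² with coordinates (z, ρ), and let P : U → ℝ² be real-analytic on U such that P(z, 0) = (z, 0) and P(0, ρ) = (0, ρ) whenever these points lie in U, and P is not the identity map of U. Then there exist N ∈ ℕ and δ > 0 such that every periodic orbit of P contained in the cone Σ_{N,δ} = {(z, ρ) : |z| < ρᴺ, 0 < ρ < δ} consists of fixed points lying on {z = 0}: if p₀, …, p_{m−1} ∈ Σ_{N,δ} satisfy P(p_i) = p_{(i+1) mod m}, then every p_i has z-coordinate 0 (hence P(p_i) = p_i). -/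
open Finset Filter Topology
open scoped NNReal ENNReal

theorem HasSum.abs_le_of_abs_le_half_pow {f : ℕ × ℕ → ℝ} {s K : ℝ} (hf : HasSum f s)
    (hK : ∀ ij, |f ij| ≤ K * ((1 / 2) ^ ij.1 * (1 / 2) ^ ij.2)) : |s| ≤ 4 * K := by
  have hgeom : HasSum (fun n : ℕ => (1 / 2 : ℝ) ^ n) 2 := hasSum_geometric_two
  have hprod : HasSum (fun ij : ℕ × ℕ => (1 / 2 : ℝ) ^ ij.1 * (1 / 2) ^ ij.2) (2 * 2) :=
    hgeom.mul hgeom (summable_geometric_two.mul_of_nonneg summable_geometric_two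
      (fun _ => by positivity) (fun _ => by positivity))
  have hbound : HasSum (fun ij : ℕ × ℕ => K * ((1 / 2) ^ ij.1 * (1 / 2) ^ ij.2)) (4 * K) := by
    have := hprod.mul_left K
    rwa [show K * (2 * 2) = 4 * K by ring] at this
  rw [abs_le]
  constructor
  · simpa using hasSum_le (fun ij => neg_le_of_abs_le (hK ij)) hbound.neg hf
  · exact hasSum_le (fun ij => le_of_abs_le (hK ij)) hf hbound

theorem hasSum_of_hasSum_sum_antidiagonal {f : ℕ × ℕ → ℝ} {s : ℝ} (hf : Summable f)
    (h : HasSum (fun n => ∑ ij ∈ antidiagonal n, f ij) s) : HasSum f s := by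
  let e := Finset.HasAntidiagonal.sigmaAntidiagonalEquivProd (A := ℕ)
  have hsigma := (e.summable_iff.mpr hf).hasSum.sigma fun n => hasSum_fintype _
  rw [Function.comp_def, e.tsum_eq f] at hsigma
  rw [h.unique (by simpa [e, Finset.sum_attach] using hsigma)]
  exact hf.hasSum

theorem eq_zero_of_hasSum_pow {c : ℕ → ℝ} {f : ℝ → ℝ} {C R : ℝ} (hR : 0 < R)
    (hc : ∀ n, |c n| ≤ C / R ^ n) (hsum : ∀ z, |z| < R → HasSum (fun n => c n * z ^ n) (f z))
    (hf : f =ᶠ[𝓝 0] 0) : c = 0 := by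
  have hseries : HasFPowerSeriesOnBall f (FormalMultilinearSeries.ofScalars ℝ c) 0
      (R.toNNReal : ℝ≥0∞) := by
    refine ⟨?_, by simpa using hR, fun {y} hy => ?_⟩
    · refine FormalMultilinearSeries.le_radius_of_bound _ C fun n => ?_
      rw [FormalMultilinearSeries.ofScalars_norm, Real.norm_eq_abs, Real.coe_toNNReal _ hR.le]
      exact (le_div_iff₀ (by positivity)).mp (hc n)
    · rw [Metric.eball_coe, mem_ball_zero_iff, Real.norm_eq_abs, Real.coe_toNNReal _ hR.le] at hy
      simpa [FormalMultilinearSeries.ofScalars_apply_eq, mul_comm] using hsum y hy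
  exact (FormalMultilinearSeries.ofScalars_series_eq_zero ℝ).mp
    (hseries.hasFPowerSeriesAt.eq_zero_of_eventually hf)

namespace FormalMultilinearSeries

noncomputable def bicoeff (p : FormalMultilinearSeries ℝ (ℝ × ℝ) ℝ) (n i : ℕ) : ℝ :=
  ∑ s : Finset (Fin n) with s.card = i, p n (s.piecewise (fun _ => (1, 0)) (fun _ => (0, 1)))

theorem abs_bicoeff_le (p : FormalMultilinearSeries ℝ (ℝ × ℝ) ℝ) (n i : ℕ) :
    |p.bicoeff n i| ≤ 2 ^ n * ‖p n‖ := by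
  have hterm : ∀ s : Finset (Fin n),
      ‖p n (s.piecewise (fun _ => (1, 0)) (fun _ => (0, 1)))‖ ≤ ‖p n‖ := by
    intro s
    simpa using (p n).le_opNorm_mul_prod_of_le (b := fun _ => 1) fun l => by
      by_cases hl : l ∈ s <;> simp [hl]
  calc |p.bicoeff n i|
      ≤ ∑ s : Finset (Fin n) with s.card = i, ‖p n‖ :=
        (abs_sum_le_sum_abs _ _).trans (sum_le_sum fun s _ => hterm s)
    _ ≤ ∑ _s : Finset (Fin n), ‖p n‖ := sum_le_sum_of_subset_of_nonneg (filter_subset _ _)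
        fun _ _ _ => norm_nonneg _
    _ = 2 ^ n * ‖p n‖ := by simp

theorem apply_pair_eq_sum_antidiagonal (p : FormalMultilinearSeries ℝ (ℝ × ℝ) ℝ) (n : ℕ)
    (z ρ : ℝ) :
    p n (fun _ => (z, ρ)) = ∑ ij ∈ antidiagonal n, p.bicoeff n ij.1 * z ^ ij.1 * ρ ^ ij.2 := by
  have hsplit : (fun _ : Fin n => ((z, ρ) : ℝ × ℝ)) =
      (fun _ => z • ((1, 0) : ℝ × ℝ)) + fun _ => ρ • ((0, 1) : ℝ × ℝ) := by
    ext <;> simp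
  have hterm : ∀ s : Finset (Fin n),
      p n (s.piecewise (fun _ => z • ((1, 0) : ℝ × ℝ)) fun _ => ρ • ((0, 1) : ℝ × ℝ)) =
        z ^ s.card * ρ ^ (n - s.card) * p n (s.piecewise (fun _ => (1, 0)) fun _ => (0, 1)) := by
    intro s
    have : (s.piecewise (fun _ => z • ((1, 0) : ℝ × ℝ)) fun _ => ρ • ((0, 1) : ℝ × ℝ)) =
        fun l => s.piecewise (fun _ => z) (fun _ => ρ) l •
          s.piecewise (fun _ => ((1, 0) : ℝ × ℝ)) (fun _ => (0, 1)) l := by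
      ext l <;> by_cases hl : l ∈ s <;> simp [hl]
    rw [this, (p n).map_smul_univ, prod_piecewise, smul_eq_mul, ← compl_eq_univ_sdiff]
    simp [card_compl]
  rw [hsplit, (p n).map_add_univ, Nat.sum_antidiagonal_eq_sum_range_succ_mk,
    ← sum_fiberwise_of_maps_to (g := Finset.card) (t := range (n + 1))
      fun s _ => mem_range_succ_iff.mpr (card_le_univ s |>.trans_eq (Fintype.card_fin n))]
  refine sum_congr rfl fun i _ => ?_
  rw [bicoeff, sum_mul, sum_mul]
  refine sum_congr rfl fun s hs => ?_
  rw [hterm, (mem_filter.mp hs).2]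
  ring

end FormalMultilinearSeries

structure HasDoublePowerSeries (F : ℝ × ℝ → ℝ) (a : ℕ × ℕ → ℝ) (C R : ℝ) : Prop where
  radius_pos : 0 < R
  abs_coeff_le : ∀ ij : ℕ × ℕ, |a ij| ≤ C / R ^ (ij.1 + ij.2)
  hasSum : ∀ z ρ : ℝ, |z| < R → |ρ| < R →
    HasSum (fun ij : ℕ × ℕ => a ij * z ^ ij.1 * ρ ^ ij.2) (F (z, ρ))

theorem summable_mul_pow_mul_pow {a : ℕ × ℕ → ℝ} {C R z ρ : ℝ} (hR : 0 < R)
    (ha : ∀ ij : ℕ × ℕ, |a ij| ≤ C / R ^ (ij.1 + ij.2)) (hz : |z| < R) (hρ : |ρ| < R) :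
    Summable fun ij : ℕ × ℕ => a ij * z ^ ij.1 * ρ ^ ij.2 := by
  have hgeom : ∀ {x : ℝ}, |x| < R → Summable fun n : ℕ => (|x| / R) ^ n := fun hx =>
    summable_geometric_of_lt_one (by positivity) ((div_lt_one hR).mpr hx)
  refine Summable.of_norm_bounded
    (((hgeom hz).mul_of_nonneg (hgeom hρ) (fun _ => by positivity) fun _ => by positivity).mul_left
      C)
    fun ij => ?_
  calc ‖a ij * z ^ ij.1 * ρ ^ ij.2‖ = |a ij| * (|z| ^ ij.1 * |ρ| ^ ij.2) := by
        simp [mul_assoc]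
    _ ≤ C / R ^ (ij.1 + ij.2) * (|z| ^ ij.1 * |ρ| ^ ij.2) := by gcongr; exact ha ij
    _ = C * ((|z| / R) ^ ij.1 * (|ρ| / R) ^ ij.2) := by
        rw [div_pow, div_pow, pow_add]
        field_simp

theorem AnalyticAt.exists_hasDoublePowerSeries {F : ℝ × ℝ → ℝ} (hF : AnalyticAt ℝ F 0) :
    ∃ a C R, HasDoublePowerSeries F a C R := by
  obtain ⟨p, r, hp⟩ := hF
  obtain ⟨r₀, hr₀, hr₀r⟩ := ENNReal.lt_iff_exists_nnreal_btwn.mp hp.r_pos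
  obtain ⟨C, -, hC⟩ := p.norm_mul_pow_le_of_lt_radius (hr₀r.trans_le hp.r_le)
  have hr₀' : (0 : ℝ) < r₀ := by exact_mod_cast hr₀
  have hcoeff : ∀ n i, |p.bicoeff n i| ≤ C / ((r₀ : ℝ) / 2) ^ n := fun n i => by
    refine (p.abs_bicoeff_le n i).trans ?_
    rw [le_div_iff₀ (by positivity)]
    calc 2 ^ n * ‖p n‖ * ((r₀ : ℝ) / 2) ^ n = ‖p n‖ * (r₀ : ℝ) ^ n := by
          rw [div_pow]; field_simp
      _ ≤ C := hC n
  refine ⟨fun ij => p.bicoeff (ij.1 + ij.2) ij.1, C, r₀ / 2,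
    ⟨by positivity, fun ij => hcoeff _ _, fun z ρ hz hρ => ?_⟩⟩
  refine hasSum_of_hasSum_sum_antidiagonal
    (summable_mul_pow_mul_pow (by positivity) (fun ij => hcoeff _ _) hz hρ) ?_
  have hq : ((z, ρ) : ℝ × ℝ) ∈ Metric.eball 0 r := by
    refine Metric.eball_subset_eball hr₀r.le ?_
    rw [Metric.eball_coe, mem_ball_zero_iff, Prod.norm_def, Real.norm_eq_abs, Real.norm_eq_abs]
    exact max_lt (by linarith) (by linarith)
  have hsum := hp.hasSum hq
  rw [zero_add] at hsum
  have hdiag : (fun n => ∑ ij ∈ antidiagonal n, p.bicoeff (ij.1 + ij.2) ij.1 * z ^ ij.1 * ρ ^ ij.2)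
      = fun n => p n fun _ => (z, ρ) := funext fun n => by
    rw [p.apply_pair_eq_sum_antidiagonal]
    exact sum_congr rfl fun ij hij => by rw [mem_antidiagonal.mp hij]
  rw [hdiag]
  exact hsum

namespace HasDoublePowerSeries

variable {F : ℝ × ℝ → ℝ} {a : ℕ × ℕ → ℝ} {C R : ℝ}

theorem const_nonneg (h : HasDoublePowerSeries F a C R) : 0 ≤ C := by
  simpa using (abs_nonneg _).trans (h.abs_coeff_le (0, 0))

theorem mono (h : HasDoublePowerSeries F a C R) {R' : ℝ} (hR' : 0 < R') (hle : R' ≤ R) :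
    HasDoublePowerSeries F a C R' where
  radius_pos := hR'
  abs_coeff_le ij := (h.abs_coeff_le ij).trans
    (div_le_div_of_nonneg_left h.const_nonneg (by positivity) (pow_le_pow_left₀ hR'.le hle _))
  hasSum z ρ hz hρ := h.hasSum z ρ (hz.trans_le hle) (hρ.trans_le hle)

theorem swap (h : HasDoublePowerSeries F a C R) :
    HasDoublePowerSeries (F ∘ Prod.swap) (a ∘ Prod.swap) C R where
  radius_pos := h.radius_pos
  abs_coeff_le ij := by simpa [add_comm] using h.abs_coeff_le ij.swap
  hasSum z ρ hz hρ := by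
    have := (Equiv.prodComm ℕ ℕ).hasSum_iff.mpr (h.hasSum ρ z hρ hz)
    convert this using 1
    · ext ij
      simp only [Function.comp_apply, Equiv.prodComm_apply, Prod.fst_swap, Prod.snd_swap]
      ring
    · rfl

theorem update (h : HasDoublePowerSeries F a C R) (k : ℕ × ℕ) :
    HasDoublePowerSeries (fun q => F q - a k * q.1 ^ k.1 * q.2 ^ k.2) (Function.update a k 0)
      C R where
  radius_pos := h.radius_pos
  abs_coeff_le ij := by
    rcases eq_or_ne ij k with rfl | hne
    · have := h.const_nonneg
      have := h.radius_pos
      simp only [Function.update_self, abs_zero]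
      positivity
    · simpa [Function.update_of_ne hne] using h.abs_coeff_le ij
  hasSum z ρ hz hρ := by
    have hfun : (fun ij => Function.update a k 0 ij * z ^ ij.1 * ρ ^ ij.2) =
        Function.update (fun ij => a ij * z ^ ij.1 * ρ ^ ij.2) k 0 := by
      ext ij
      rcases eq_or_ne ij k with rfl | hne <;> simp [*]
    have hsum := (h.hasSum z ρ hz hρ).update k 0
    rw [zero_sub, neg_add_eq_sub] at hsum
    rw [hfun]
    exact hsum

theorem hasSum_fst (h : HasDoublePowerSeries F a C R) {z : ℝ} (hz : |z| < R) :
    HasSum (fun i => a (i, 0) * z ^ i) (F (z, 0)) := by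
  have hsum := h.hasSum z 0 hz (by simpa using h.radius_pos)
  rw [← (Prod.mk_left_injective 0).hasSum_iff fun ij hij => ?_] at hsum
  · simpa [Function.comp_def] using hsum
  · have : ij.2 ≠ 0 := fun h0 => hij ⟨ij.1, by simp [← h0]⟩
    simp [this]

theorem coeff_fst_eq_zero (h : HasDoublePowerSeries F a C R)
    (hF : ∀ᶠ z in 𝓝 0, F (z, 0) = 0) (i : ℕ) : a (i, 0) = 0 :=
  congrFun (eq_zero_of_hasSum_pow h.radius_pos (fun n => by simpa using h.abs_coeff_le (n, 0))
    (fun _ hz => h.hasSum_fst hz) hF) i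

theorem coeff_snd_eq_zero (h : HasDoublePowerSeries F a C R)
    (hF : ∀ᶠ ρ in 𝓝 0, F (0, ρ) = 0) (j : ℕ) : a (0, j) = 0 :=
  h.swap.coeff_fst_eq_zero hF j

theorem eventuallyEq_zero (h : HasDoublePowerSeries F a C R) (ha : ∀ ij, a ij = 0) :
    F =ᶠ[𝓝 0] 0 := by
  filter_upwards [Metric.ball_mem_nhds 0 h.radius_pos] with q hq
  rw [mem_ball_zero_iff, Prod.norm_def, Real.norm_eq_abs, Real.norm_eq_abs, max_lt_iff] at hq
  have hsum := h.hasSum q.1 q.2 hq.1 hq.2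
  simp only [ha, zero_mul, Prod.mk.eta] at hsum
  exact hsum.unique hasSum_zero

theorem abs_le (h : HasDoublePowerSeries F a C R) {z ρ M : ℝ} (hz : |z| < R) (hρ : |ρ| < R)
    (hM : 0 ≤ M) (hmon : ∀ i j, a (i, j) ≠ 0 → (2 * |z| / R) ^ i * (2 * |ρ| / R) ^ j ≤ M) :
    |F (z, ρ)| ≤ 4 * (C * M) := by
  have hC := h.const_nonneg
  have hR := h.radius_pos
  refine (h.hasSum z ρ hz hρ).abs_le_of_abs_le_half_pow fun ⟨i, j⟩ => ?_
  by_cases ha : a (i, j) = 0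
  · simp only [ha, zero_mul, abs_zero]
    positivity
  calc |a (i, j) * z ^ i * ρ ^ j| = |a (i, j)| * (|z| ^ i * |ρ| ^ j) := by
        simp [abs_mul, mul_assoc]
    _ ≤ C / R ^ (i + j) * (|z| ^ i * |ρ| ^ j) := by gcongr; exact h.abs_coeff_le (i, j)
    _ = C * ((2 * |z| / R) ^ i * (2 * |ρ| / R) ^ j) * ((1 / 2) ^ i * (1 / 2) ^ j) := by
        rw [div_pow, div_pow, mul_pow, mul_pow, pow_add, one_div_pow, one_div_pow]
        field_simp
    _ ≤ C * M * ((1 / 2) ^ i * (1 / 2) ^ j) := by gcongr; exact hmon i j ha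

end HasDoublePowerSeries

theorem exists_lexMin_ne_zero {M : Type*} [Zero M] {a : ℕ × ℕ → M} (h : ∃ ij, a ij ≠ 0) :
    ∃ i₀ j₀, a (i₀, j₀) ≠ 0 ∧ ∀ i j, a (i, j) ≠ 0 → i₀ < i ∨ i₀ = i ∧ j₀ ≤ j := by
  obtain ⟨ij, hij⟩ := h
  obtain ⟨x, hx, hmin⟩ := wellFounded_lt.has_min {x : ℕ ×ₗ ℕ | a (ofLex x) ≠ 0} ⟨toLex ij, hij⟩
  exact ⟨(ofLex x).1, (ofLex x).2, hx, fun i j hij =>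
    Prod.Lex.le_iff.mp (not_lt.mp (hmin (toLex (i, j)) hij))⟩

theorem pow_mul_pow_le_pow_mul_pow_succ {u v : ℝ} {i j i₀ j₀ : ℕ} (hu : 0 ≤ u) (hv : 0 ≤ v)
    (hv1 : v ≤ 1) (huv : u ≤ v ^ (j₀ + 1)) (hij : i₀ < i ∨ i₀ = i ∧ j₀ < j) :
    u ^ i * v ^ j ≤ u ^ i₀ * v ^ (j₀ + 1) := by
  have hu1 : u ≤ 1 := huv.trans (pow_le_one₀ hv hv1)
  rcases hij with hi | ⟨rfl, hj⟩
  · calc u ^ i * v ^ j ≤ u ^ (i₀ + 1) * 1 :=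
          mul_le_mul (pow_le_pow_of_le_one hu hu1 hi) (pow_le_one₀ hv hv1) (by positivity)
            (by positivity)
      _ = u ^ i₀ * u := by rw [mul_one, pow_succ]
      _ ≤ u ^ i₀ * v ^ (j₀ + 1) := by gcongr
  · exact mul_le_mul_of_nonneg_left (pow_le_pow_of_le_one hv hv1 hj) (by positivity)

namespace HasDoublePowerSeries

variable {F : ℝ × ℝ → ℝ} {a : ℕ × ℕ → ℝ} {C R : ℝ}

theorem abs_le_of_coeff_axes_eq_zero (h : HasDoublePowerSeries F a C R)
    (ha0 : ∀ i, a (i, 0) = 0) (h0a : ∀ j, a (0, j) = 0) {z ρ : ℝ} (hz : |z| ≤ R / 2)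
    (hρ : |ρ| ≤ R / 2) : |F (z, ρ)| ≤ 16 * C / R ^ 2 * (|z| * |ρ|) := by
  have hR := h.radius_pos
  have hu1 : 2 * |z| / R ≤ 1 := by rw [div_le_one hR]; linarith
  have hv1 : 2 * |ρ| / R ≤ 1 := by rw [div_le_one hR]; linarith
  calc |F (z, ρ)| ≤ 4 * (C * (2 * |z| / R * (2 * |ρ| / R))) := by
        refine h.abs_le (by linarith) (by linarith) (by positivity) fun i j hij => ?_
        have hi : i ≠ 0 := by rintro rfl; exact hij (h0a j)
        have hj : j ≠ 0 := by rintro rfl; exact hij (ha0 i)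
        exact mul_le_mul (pow_le_of_le_one (by positivity) hu1 hi)
          (pow_le_of_le_one (by positivity) hv1 hj) (by positivity) (by positivity)
    _ = 16 * C / R ^ 2 * (|z| * |ρ|) := by field_simp; ring

theorem abs_sub_leading_le (h : HasDoublePowerSeries F a C R) (hR2 : R ≤ 2) {i₀ j₀ : ℕ}
    (hmin : ∀ i j, a (i, j) ≠ 0 → i₀ < i ∨ i₀ = i ∧ j₀ ≤ j) {z ρ : ℝ} (hρ : 0 < ρ)
    (hρR : ρ ≤ R / 2) (hz : |z| ≤ ρ ^ (j₀ + 1)) :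
    |F (z, ρ) - a (i₀, j₀) * z ^ i₀ * ρ ^ j₀| ≤
      4 * C * (2 / R) ^ (i₀ + j₀ + 1) * (|z| ^ i₀ * ρ ^ (j₀ + 1)) := by
  have hR := h.radius_pos
  have hv1 : 2 * |ρ| / R ≤ 1 := by rw [abs_of_pos hρ, div_le_one hR]; linarith
  have hzR : |z| ≤ R / 2 :=
    hz.trans ((pow_le_of_le_one hρ.le (by linarith) j₀.succ_ne_zero).trans hρR)
  -- On the cone `|z| ≤ ρ^(j₀+1)` one more factor `z` is as small as `ρ^(j₀+1)`, so every
  -- monomial lexicographically after `(i₀, j₀)` is `O(|z|^i₀ ρ^(j₀+1))`.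
  have huv : 2 * |z| / R ≤ (2 * |ρ| / R) ^ (j₀ + 1) := by
    have h2R : 1 ≤ 2 / R := by rw [le_div_iff₀ hR]; linarith
    calc 2 * |z| / R = 2 / R * |z| := by ring
      _ ≤ (2 / R) ^ (j₀ + 1) * ρ ^ (j₀ + 1) := by
          gcongr
          exact le_self_pow₀ h2R j₀.succ_ne_zero
      _ = (2 * |ρ| / R) ^ (j₀ + 1) := by rw [abs_of_pos hρ, ← mul_pow]; ring
  calc |F (z, ρ) - a (i₀, j₀) * z ^ i₀ * ρ ^ j₀|
      ≤ 4 * (C * ((2 * |z| / R) ^ i₀ * (2 * |ρ| / R) ^ (j₀ + 1))) := by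
        refine (h.update (i₀, j₀)).abs_le (by linarith) (by rw [abs_of_pos hρ]; linarith)
          (by positivity) fun i j hij => ?_
        have hne : (i, j) ≠ (i₀, j₀) := by rintro h; simp [h] at hij
        rw [Function.update_of_ne hne] at hij
        refine pow_mul_pow_le_pow_mul_pow_succ (by positivity) (by positivity) hv1 huv ?_
        rcases hmin i j hij with hi | ⟨rfl, hj⟩
        · exact Or.inl hi
        · exact Or.inr ⟨rfl, lt_of_le_of_ne hj fun hjj => hne (by rw [hjj])⟩
    _ = 4 * C * (2 / R) ^ (i₀ + j₀ + 1) * (|z| ^ i₀ * ρ ^ (j₀ + 1)) := by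
        rw [abs_of_pos hρ]; ring

end HasDoublePowerSeries

theorem mul_pos_of_abs_sub_mul_le {A B F t : ℝ} (hA : A ≠ 0) (hB : 0 < B) (ht : t < 1)
    (h : |F - A * B| ≤ t * |A| * B) : 0 < A * F := by
  have h1 : -(|A| * |F - A * B|) ≤ A * (F - A * B) := by rw [← abs_mul]; exact neg_abs_le _
  have h2 : |A| * |F - A * B| ≤ t * A ^ 2 * B := by
    calc |A| * |F - A * B| ≤ |A| * (t * |A| * B) := mul_le_mul_of_nonneg_left h (abs_nonneg A)
      _ = t * A ^ 2 * B := by rw [← sq_abs A]; ring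
  have h3 : 0 < (1 - t) * A ^ 2 * B := by
    have := sub_pos.mpr ht
    positivity
  nlinarith

theorem cone_subset_cone {M N : ℕ} {δ δ' : ℝ} (hMN : M ≤ N) (hδ : δ ≤ 1) (hδδ' : δ ≤ δ') :
    cone N δ ⊆ cone M δ' := fun _ ⟨hz, hρ, hρδ⟩ =>
  ⟨hz.trans_le (pow_le_pow_of_le_one hρ.le (hρδ.le.trans hδ) hMN), hρ, hρδ.trans_le hδδ'⟩

theorem AnalyticAt.exists_abs_le_half_abs_fst_on_cone {F : ℝ × ℝ → ℝ} (hF : AnalyticAt ℝ F 0)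
    (hz : ∀ᶠ z in 𝓝 0, F (z, 0) = 0) (hρ : ∀ᶠ ρ in 𝓝 0, F (0, ρ) = 0) :
    ∃ δ > 0, ∀ q ∈ cone 1 δ, |F q| ≤ |q.1| / 2 := by
  obtain ⟨a, C, R, h⟩ := hF.exists_hasDoublePowerSeries
  have hR := h.radius_pos
  have hC := h.const_nonneg
  refine ⟨min (R / 2) (R ^ 2 / (32 * C + 1)), by positivity, ?_⟩
  rintro ⟨z, ρ⟩ ⟨hzρ, hρ0, hρδ⟩
  rw [pow_one] at hzρ
  have hρR : ρ ≤ R / 2 := (hρδ.trans_le (min_le_left _ _)).le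
  have hCρ : 32 * C * ρ ≤ R ^ 2 := by
    have := (hρδ.trans_le (min_le_right _ _))
    rw [lt_div_iff₀ (by positivity)] at this
    nlinarith
  calc |F (z, ρ)| ≤ 16 * C / R ^ 2 * (|z| * |ρ|) :=
        h.abs_le_of_coeff_axes_eq_zero (h.coeff_fst_eq_zero hz) (h.coeff_snd_eq_zero hρ)
          (by linarith) (by rw [abs_of_pos hρ0]; exact hρR)
    _ ≤ |z| / 2 := by
        rw [abs_of_pos hρ0, div_mul_eq_mul_div, div_le_div_iff₀ (by positivity) two_pos]
        nlinarith [abs_nonneg z, mul_le_mul_of_nonneg_left hCρ (abs_nonneg z)]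

theorem AnalyticAt.exists_pos_mul_pow_mul_on_cone {F : ℝ × ℝ → ℝ} (hF : AnalyticAt ℝ F 0)
    (hF0 : ¬ F =ᶠ[𝓝 0] 0) :
    ∃ (N k : ℕ) (δ c : ℝ), 0 < N ∧ 0 < δ ∧ ∀ q ∈ cone N δ, q.1 ≠ 0 → 0 < c * q.1 ^ k * F q := by
  obtain ⟨a, C, R₀, h₀⟩ := hF.exists_hasDoublePowerSeries
  obtain ⟨R, hR1, h⟩ : ∃ R ≤ 1, HasDoublePowerSeries F a C R :=
    ⟨_, min_le_right _ _, h₀.mono (lt_min h₀.radius_pos one_pos) (min_le_left _ _)⟩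
  have hR := h.radius_pos
  have hC := h.const_nonneg
  obtain ⟨i₀, j₀, ha₀, hmin⟩ := exists_lexMin_ne_zero (a := a) (by
    by_contra! ha
    exact hF0 (h.eventuallyEq_zero ha))
  set K := 4 * C * (2 / R) ^ (i₀ + j₀ + 1)
  have hK : 0 ≤ K := by positivity
  refine ⟨j₀ + 1, i₀, min (R / 2) (|a (i₀, j₀)| / (K + 1)), a (i₀, j₀), j₀.succ_pos,
    by positivity, ?_⟩
  rintro ⟨z, ρ⟩ ⟨hz, hρ, hρδ⟩ hz0
  dsimp only at hz hρ hρδ hz0 ⊢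
  have hKρ : K * ρ < |a (i₀, j₀)| := by
    have := hρδ.trans_le (min_le_right _ _)
    rw [lt_div_iff₀ (by positivity)] at this
    nlinarith
  have hlead := h.abs_sub_leading_le (hR1.trans one_le_two) hmin hρ
    (hρδ.trans_le (min_le_left _ _)).le hz.le
  refine mul_pos_of_abs_sub_mul_le (mul_ne_zero ha₀ (pow_ne_zero _ hz0)) (pow_pos hρ j₀)
    (t := K * ρ / |a (i₀, j₀)|) ((div_lt_one (abs_pos.mpr ha₀)).mpr hKρ) ?_
  calc |F (z, ρ) - a (i₀, j₀) * z ^ i₀ * ρ ^ j₀| ≤ K * (|z| ^ i₀ * ρ ^ (j₀ + 1)) := hlead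
    _ = K * ρ / |a (i₀, j₀)| * |a (i₀, j₀) * z ^ i₀| * ρ ^ j₀ := by
        rw [abs_mul, abs_pow]
        field_simp
        ring

theorem exists_clm_comp_not_eventuallyEq_zero {α : Type*} {l : Filter α} {G : α → ℝ × ℝ}
    (h : ¬ G =ᶠ[l] 0) : ∃ ℓ : ℝ × ℝ →L[ℝ] ℝ, ¬ (ℓ ∘ G) =ᶠ[l] 0 := by
  by_contra! hall
  exact h (((hall (.fst ℝ ℝ ℝ)).and (hall (.snd ℝ ℝ ℝ))).mono fun x hx => Prod.ext hx.1 hx.2)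

theorem exists_succ_le_of_apply_eq {f : ℕ → ℝ} {m : ℕ} (hm : 0 < m) (hper : f m = f 0) :
    ∃ i < m, f (i + 1) ≤ f i := by
  by_contra! h
  have := sum_pos (fun i hi => sub_pos.mpr (h i (mem_range.mp hi))) (nonempty_range_iff.mpr hm.ne')
  rw [sum_range_sub f, hper, sub_self] at this
  exact lt_irrefl 0 this

theorem mul_pos_of_abs_sub_le_half {w x y : ℝ} (hwx : 0 < w * x) (h : |y - x| ≤ |x| / 2) :
    0 < w * y := by
  have hx : x ≠ 0 := right_ne_zero_of_mul hwx.ne'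
  have hxy : 0 < x * y := by
    have h1 := neg_abs_le (x * (y - x))
    rw [abs_mul] at h1
    have h2 : |x| * |y - x| ≤ |x| * (|x| / 2) := mul_le_mul_of_nonneg_left h (abs_nonneg x)
    nlinarith [abs_mul_abs_self x, mul_self_pos.mpr hx]
  have : 0 < w * y * (x * x) := by
    rw [show w * y * (x * x) = w * x * (x * y) by ring]
    exact mul_pos hwx hxy
  exact (pos_iff_pos_of_mul_pos this).mpr (mul_self_pos.mpr hx)

theorem mul_pow_mul_pos_of_mul_pos {x y c d : ℝ} (k : ℕ) (hxy : 0 < x * y)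
    (h : 0 < c * y ^ k * d) : 0 < c * x ^ k * d := by
  have hx : x ≠ 0 := left_ne_zero_of_mul hxy.ne'
  have : 0 < c * x ^ k * d * (x * y) ^ k := by
    rw [show c * x ^ k * d * (x * y) ^ k = c * y ^ k * d * (x ^ k) ^ 2 by ring]
    positivity
  exact (pos_iff_pos_of_mul_pos this).mpr (pow_pos hxy k)

section PeriodicOrbit

variable {P : ℝ × ℝ → ℝ × ℝ} {S : Set (ℝ × ℝ)} {m : ℕ} {p : ℕ → ℝ × ℝ}

theorem fst_orbit_eq_zero_of_fst_eq_zero (hfst : ∀ q ∈ S, |(P q).1 - q.1| ≤ |q.1| / 2)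
    (hS : ∀ i < m, p i ∈ S) (hstep : ∀ i < m, P (p i) = p (i + 1)) (h0 : (p 0).1 = 0) :
    ∀ i ≤ m, (p i).1 = 0 := by
  intro i hi
  induction i with
  | zero => exact h0
  | succ i ih =>
    have hi' : i < m := hi
    have := hfst _ (hS i hi')
    rw [hstep i hi', ih hi'.le] at this
    simpa using this

theorem mul_fst_orbit_pos (hfst : ∀ q ∈ S, |(P q).1 - q.1| ≤ |q.1| / 2)
    (hS : ∀ i < m, p i ∈ S) (hstep : ∀ i < m, P (p i) = p (i + 1)) (h0 : (p 0).1 ≠ 0) :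
    ∀ i ≤ m, 0 < (p 0).1 * (p i).1 := by
  intro i hi
  induction i with
  | zero => exact mul_self_pos.mpr h0
  | succ i ih =>
    have hi' : i < m := hi
    exact mul_pos_of_abs_sub_le_half (ih hi'.le) (hstep i hi' ▸ hfst _ (hS i hi'))

theorem fst_eq_zero_of_periodic_orbit {φ : ℝ × ℝ → ℝ} {c : ℝ} {k : ℕ}
    (hfst : ∀ q ∈ S, |(P q).1 - q.1| ≤ |q.1| / 2)
    (hincr : ∀ q ∈ S, q.1 ≠ 0 → 0 < c * q.1 ^ k * (φ (P q) - φ q))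
    (hm : 0 < m) (hS : ∀ i < m, p i ∈ S) (hstep : ∀ i < m, P (p i) = p (i + 1))
    (hper : p m = p 0) : ∀ i < m, (p i).1 = 0 := by
  by_cases h0 : (p 0).1 = 0
  · exact fun i hi => fst_orbit_eq_zero_of_fst_eq_zero hfst hS hstep h0 i hi.le
  exfalso
  have hsign := mul_fst_orbit_pos hfst hS hstep h0
  obtain ⟨i, hi, hle⟩ := exists_succ_le_of_apply_eq (f := fun i => c * (p 0).1 ^ k * φ (p i)) hm
    (by rw [hper])
  have hzi : (p i).1 ≠ 0 := fun h => by simpa [h] using hsign i hi.le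
  have hpos := mul_pow_mul_pos_of_mul_pos k (hsign i hi.le) (hincr _ (hS i hi) hzi)
  rw [hstep i hi, mul_sub] at hpos
  linarith

end PeriodicOrbit

/-- **Periodic orbits in a cone around a curve of fixed points are fixed points on the
curve** (Lemma 5.8): if `P` is real-analytic on a connected open neighborhood `U` of
`0 ∈ ℝ²`, fixes both coordinate axes pointwise (where they meet `U`), and is not the
identity of `U`, then there are `N` and `δ > 0` such that every periodic orbit of `P`
contained in `Σ_{N,δ}` consists of points with `z`-coordinate `0` (hence fixed points). -/
theorem periodic_orbits_in_cone_fixed_curve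
    (U : Set (ℝ × ℝ)) (hUopen : IsOpen U) (hUconn : IsConnected U)
    (hU0 : ((0, 0) : ℝ × ℝ) ∈ U)
    (P : ℝ × ℝ → ℝ × ℝ) (hP : AnalyticOnNhd ℝ P U)
    (hfixz : ∀ z : ℝ, ((z, (0 : ℝ)) ∈ U) → P (z, 0) = (z, 0))
    (hfixρ : ∀ ρ : ℝ, (((0 : ℝ), ρ) ∈ U) → P (0, ρ) = (0, ρ))
    (hPneId : ¬ ∀ p ∈ U, P p = p) :
    ∃ (N : ℕ) (δ : ℝ), 0 < δ ∧
      ∀ (m : ℕ) (p : ℕ → ℝ × ℝ), 0 < m →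
        (∀ i < m, p i ∈ cone N δ) → (∀ i < m, P (p i) = p (i + 1)) → p m = p 0 →
        ∀ i < m, (p i).1 = 0 := by
  set G : ℝ × ℝ → ℝ × ℝ := fun q => P q - q with hG
  have hGan : AnalyticOnNhd ℝ G U := hP.sub analyticOnNhd_id
  have hG0 : ¬ G =ᶠ[𝓝 0] 0 := fun hev => hPneId fun q hq => sub_eq_zero.mp
    (hGan.eqOn_zero_of_preconnected_of_eventuallyEq_zero hUconn.isPreconnected hU0 hev hq)
  have hU : U ∈ 𝓝 ((0, 0) : ℝ × ℝ) := hUopen.mem_nhds hU0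
  have hGz : ∀ᶠ z in 𝓝 (0 : ℝ), G (z, 0) = 0 :=
    ((continuous_id.prodMk continuous_const).tendsto' _ _ rfl).eventually hU |>.mono
      fun z hz => by simp [hG, hfixz z hz]
  have hGρ : ∀ᶠ ρ in 𝓝 (0 : ℝ), G (0, ρ) = 0 :=
    ((continuous_const.prodMk continuous_id).tendsto' _ _ rfl).eventually hU |>.mono
      fun ρ hρ => by simp [hG, hfixρ ρ hρ]
  obtain ⟨ℓ, hℓ⟩ := exists_clm_comp_not_eventuallyEq_zero hG0
  obtain ⟨N, k, δ₁, c, hN, hδ₁, hsign⟩ :=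
    ((ℓ.analyticAt _).comp (hGan 0 hU0)).exists_pos_mul_pow_mul_on_cone hℓ
  obtain ⟨δ₂, hδ₂, hfst⟩ :=
    (((ContinuousLinearMap.fst ℝ ℝ ℝ).analyticAt _).comp
      (hGan 0 hU0)).exists_abs_le_half_abs_fst_on_cone
      (hGz.mono fun z hz => by simp [hz]) (hGρ.mono fun ρ hρ => by simp [hρ])
  set δ := min (min δ₁ δ₂) 1
  refine ⟨N, δ, by positivity, fun m p hm hcone hstep hper => ?_⟩
  refine fst_eq_zero_of_periodic_orbit (φ := ℓ) (c := c) (k := k) (fun q hq => ?_)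
    (fun q hq hq0 => ?_) hm hcone hstep hper
  · simpa [hG] using hfst q (cone_subset_cone hN (min_le_right _ _)
      ((min_le_left _ _).trans (min_le_right _ _)) hq)
  · simpa [hG] using hsign q (cone_subset_cone le_rfl (min_le_right _ _)
      ((min_le_left _ _).trans (min_le_left _ _)) hq) hq0
end
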